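/- arXiv:1810.01458 — 3 statements merged into one kernel-verified Lean document; each statement's English description precedes it below -/
import Mathlib

section
/- If F(z) = ∏_{i=1}^n (z - β_i) = ∑_{k=0}^n c_k z^k with β_i ∈ ℂ, then for 0 ≤ k ≤ n, |c_k| ≤ C(n,k) · ((1/n) ∑_{i=1}^n |β_i|^n)^{1 - k/n}. -/
/-! Up to sign, `c_k` is the elementary symmetric function `e_m` of the roots, `m = n - k`, so
`|c_k| ≤ e_m(|β|)`. By AM-GM each monomial satisfies `∏_{i ∈ t} a_i ≤ (1/m) ∑_{i ∈ t} a_i ^ m`,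
and every index lies in `C(n-1, m-1)` of the `m`-subsets, whence
`e_m(a) ≤ C(n, m) · (1/n) ∑ a_i ^ m`. The power-mean inequality between the orders `m ≤ n`
finishes the proof. -/

open Polynomial Finset

theorem Finset.sum_powersetCard_add_one_sum {α M : Type*} [AddCommMonoid M]
    (s : Finset α) (m : ℕ) (f : α → M) :
    ∑ t ∈ s.powersetCard (m + 1), ∑ i ∈ t, f i = (#s - 1).choose m • ∑ i ∈ s, f i := by
  classical
  rw [Finset.sum_comm' (s' := fun i => (s.powersetCard (m + 1)).filter ({i} ⊆ ·)) (t' := s)]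
  · rw [Finset.smul_sum]
    refine Finset.sum_congr rfl fun i hi => ?_
    rw [Finset.sum_const, card_filter_powersetCard_subset _ _ _ (singleton_subset_iff.2 hi)
      (by simp), card_singleton, Nat.add_sub_cancel]
  · intro t i
    simp only [mem_filter, mem_powersetCard, singleton_subset_iff]
    grind

theorem Real.prod_le_sum_pow_card_div_card {ι : Type*} {t : Finset ι} (ht : t.Nonempty)
    {a : ι → ℝ} (ha : ∀ i ∈ t, 0 ≤ a i) :
    ∏ i ∈ t, a i ≤ (∑ i ∈ t, a i ^ #t) / #t := by
  have hcard : (#t : ℝ) ≠ 0 := Nat.cast_ne_zero.2 ht.card_ne_zero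
  have amgm := Real.geom_mean_le_arith_mean_weighted t (fun _ => (#t : ℝ)⁻¹)
    (fun i => a i ^ #t) (fun _ _ => by positivity) (by simp [hcard])
    (fun i hi => pow_nonneg (ha i hi) _)
  calc ∏ i ∈ t, a i = ∏ i ∈ t, (a i ^ #t) ^ (#t : ℝ)⁻¹ :=
        Finset.prod_congr rfl fun i hi => (Real.pow_rpow_inv_natCast (ha i hi) ht.card_ne_zero).symm
    _ ≤ ∑ i ∈ t, (#t : ℝ)⁻¹ * a i ^ #t := amgm
    _ = (∑ i ∈ t, a i ^ #t) / #t := by rw [← Finset.mul_sum, inv_mul_eq_div]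

theorem Real.sum_powersetCard_prod_le_choose_mul_sum_pow_div_card {ι : Type*}
    {s : Finset ι} (hs : s.Nonempty) {a : ι → ℝ} (ha : ∀ i ∈ s, 0 ≤ a i) (m : ℕ) :
    ∑ t ∈ s.powersetCard m, ∏ i ∈ t, a i ≤ (#s).choose m * ((∑ i ∈ s, a i ^ m) / #s) := by
  obtain ⟨n, hn⟩ : ∃ n, #s = n + 1 := Nat.exists_eq_add_one.2 hs.card_pos
  cases m with
  | zero => simp [hs.card_ne_zero]
  | succ m =>
    have hchoose : ((n.choose m : ℕ) : ℝ) * (n + 1) = ((n + 1).choose (m + 1) : ℕ) * (m + 1) := by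
      exact_mod_cast (mul_comm _ _).trans (Nat.add_one_mul_choose_eq n m)
    calc ∑ t ∈ s.powersetCard (m + 1), ∏ i ∈ t, a i
        ≤ ∑ t ∈ s.powersetCard (m + 1), (∑ i ∈ t, a i ^ (m + 1)) / (m + 1 : ℕ) := by
          refine Finset.sum_le_sum fun t ht => ?_
          obtain ⟨hts, htm⟩ := mem_powersetCard.1 ht
          rw [← htm]
          exact Real.prod_le_sum_pow_card_div_card (card_pos.1 (by omega)) fun i hi => ha i (hts hi)
      _ = n.choose m * (∑ i ∈ s, a i ^ (m + 1)) / (m + 1 : ℕ) := by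
          rw [← Finset.sum_div, Finset.sum_powersetCard_add_one_sum, nsmul_eq_mul, hn,
            Nat.add_sub_cancel]
      _ = (#s).choose (m + 1) * ((∑ i ∈ s, a i ^ (m + 1)) / #s) := by
          rw [hn]
          field_simp
          push_cast
          linear_combination (∑ i ∈ s, a i ^ (m + 1)) * hchoose

theorem Real.sum_pow_div_card_le_sum_pow_div_card_rpow {ι : Type*} (s : Finset ι) {z : ι → ℝ}
    (hz : ∀ i ∈ s, 0 ≤ z i) {m n : ℕ} (hmn : m ≤ n) :
    (∑ i ∈ s, z i ^ m) / #s ≤ ((∑ i ∈ s, z i ^ n) / #s) ^ ((m : ℝ) / n) := by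
  rcases s.eq_empty_or_nonempty with rfl | hs
  · simp only [sum_empty, zero_div]
    positivity
  have hcard : (#s : ℝ) ≠ 0 := Nat.cast_ne_zero.2 hs.card_ne_zero
  rcases m.eq_zero_or_pos with rfl | hm
  · simp [hcard]
  have hm' : (m : ℝ) ≠ 0 := by positivity
  have jensen := Real.arith_mean_le_rpow_mean s (fun _ => (#s : ℝ)⁻¹) (fun i => z i ^ m)
    (fun _ _ => by positivity) (by simp [hcard]) (fun i hi => pow_nonneg (hz i hi) m)
    (p := (n : ℝ) / m) ((one_le_div (by positivity)).2 (by exact_mod_cast hmn))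
  rw [← Finset.mul_sum, ← Finset.mul_sum, inv_mul_eq_div, inv_mul_eq_div, one_div_div] at jensen
  convert jensen using 4 with i hi
  rw [← Real.rpow_natCast, ← Real.rpow_natCast, ← Real.rpow_mul (hz i hi), mul_div_cancel₀ _ hm']

theorem Polynomial.norm_coeff_prod_X_sub_C_le {R ι : Type*} [NormedCommRing R] [NormOneClass R]
    (s : Finset ι) (β : ι → R) {k : ℕ} (hk : k ≤ #s) :
    ‖(∏ i ∈ s, (X - C (β i))).coeff k‖ ≤ ∑ t ∈ s.powersetCard (#s - k), ∏ i ∈ t, ‖β i‖ := by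
  simp_rw [sub_eq_add_neg, ← map_neg C]
  rw [Finset.prod_X_add_C_coeff s _ hk]
  refine (norm_sum_le _ _).trans (Finset.sum_le_sum fun t _ => ?_)
  simpa only [norm_neg] using Finset.norm_prod_le t fun i => -β i

theorem coeff_power_mean_bound (n : ℕ) (hn : 1 ≤ n) (β : Fin n → ℂ) (k : ℕ) (hk : k ≤ n) :
    ‖(∏ i, (X - C (β i))).coeff k‖ ≤
      (n.choose k : ℝ) *
        ((1 / (n : ℝ)) * ∑ i, ‖β i‖ ^ n) ^ ((1 : ℝ) - (k : ℝ) / (n : ℝ)) := by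
  have hexp : (1 : ℝ) - k / n = ((n - k : ℕ) : ℝ) / n := by
    rw [Nat.cast_sub hk, sub_div, div_self (by positivity)]
  have hnonneg : ∀ i ∈ (univ : Finset (Fin n)), 0 ≤ ‖β i‖ := fun i _ => norm_nonneg _
  rw [hexp, one_div_mul_eq_div, ← Nat.choose_symm hk]
  calc ‖(∏ i, (X - C (β i))).coeff k‖
      ≤ ∑ t ∈ univ.powersetCard (n - k), ∏ i ∈ t, ‖β i‖ := by
        simpa using norm_coeff_prod_X_sub_C_le univ β (by simpa using hk)
    _ ≤ n.choose (n - k) * ((∑ i, ‖β i‖ ^ (n - k)) / n) := by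
        simpa using Real.sum_powersetCard_prod_le_choose_mul_sum_pow_div_card
          (univ_nonempty_iff.2 ⟨⟨0, hn⟩⟩) hnonneg (n - k)
    _ ≤ _ := by
        gcongr
        simpa using Real.sum_pow_div_card_le_sum_pow_div_card_rpow univ hnonneg (Nat.sub_le n k)
end

section
/- The elementary symmetric mean bound: for nonnegative reals x_1, …, x_n and 0 ≤ k ≤ n, the elementary symmetric polynomial satisfies e_{n-k}(x_1,…,x_n) ≤ C(n,k) · ((1/n) ∑_{i=1}^n x_i^n)^{(n-k)/n}. -/
/-!
Summing AM–GM `m · ∏_{i∈S} x_i ≤ ∑_{i∈S} x_i^m` over all `m`-subsets `S`, each `x_i^m` is counted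
`C(n-1, m-1)` times, which gives the Muirhead inequality `n · e_m ≤ C(n, m) · ∑ x_i^m`. The power
mean inequality between the exponents `m ≤ n` then bounds `(1/n) ∑ x_i^m` by
`((1/n) ∑ x_i^n)^(m/n)`.
-/

open Finset

theorem Finset.sum_powersetCard_succ_sum {ι M : Type*} [DecidableEq ι] [AddCommMonoid M]
    (s : Finset ι) (r : ℕ) (f : ι → M) :
    ∑ t ∈ s.powersetCard (r + 1), ∑ i ∈ t, f i = (#s - 1).choose r • ∑ i ∈ s, f i := by
  rw [sum_comm' (t' := s) (s' := fun i => {t ∈ s.powersetCard (r + 1) | {i} ⊆ t})]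
  · rw [smul_sum]
    refine sum_congr rfl fun i hi => ?_
    rw [sum_const, card_filter_powersetCard_subset {i} s (r + 1) (singleton_subset_iff.2 hi)
      (by simp), card_singleton, Nat.add_sub_cancel]
  · intro t i
    simp only [mem_powersetCard, mem_filter, singleton_subset_iff]
    exact ⟨fun h => ⟨h, h.1.1 h.2⟩, And.left⟩

theorem Real.card_mul_prod_le_sum_pow_card {ι : Type*} (s : Finset ι) (x : ι → ℝ)
    (hx : ∀ i ∈ s, 0 ≤ x i) : #s * ∏ i ∈ s, x i ≤ ∑ i ∈ s, x i ^ #s := by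
  rcases s.eq_empty_or_nonempty with rfl | hs
  · simp
  have hcard : (#s : ℝ) ≠ 0 := by exact_mod_cast hs.card_pos.ne'
  have amgm := geom_mean_le_arith_mean_weighted s (fun _ => (#s : ℝ)⁻¹) (fun i => x i ^ #s)
    (fun _ _ => by positivity) (by simp [hcard]) (fun i hi => pow_nonneg (hx i hi) _)
  rw [← mul_sum, prod_congr rfl fun i hi => pow_rpow_inv_natCast (hx i hi) hs.card_pos.ne'] at amgm
  exact (le_inv_mul_iff₀ (by positivity)).1 amgm

theorem Real.card_mul_sum_powersetCard_prod_le {ι : Type*} [DecidableEq ι] (s : Finset ι) (m : ℕ)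
    (x : ι → ℝ) (hx : ∀ i ∈ s, 0 ≤ x i) :
    #s * ∑ t ∈ s.powersetCard m, ∏ i ∈ t, x i ≤ (#s).choose m * ∑ i ∈ s, x i ^ m := by
  cases m with
  | zero => simp
  | succ r =>
    have amgm : (r + 1 : ℝ) * ∑ t ∈ s.powersetCard (r + 1), ∏ i ∈ t, x i
        ≤ (#s - 1).choose r * ∑ i ∈ s, x i ^ (r + 1) := by
      rw [mul_sum, ← nsmul_eq_mul, ← sum_powersetCard_succ_sum]
      refine sum_le_sum fun t ht => ?_
      obtain ⟨hts, hcard⟩ := mem_powersetCard.1 ht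
      exact_mod_cast hcard ▸ card_mul_prod_le_sum_pow_card t x fun i hi => hx i (hts hi)
    have hchoose : (#s : ℝ) * (#s - 1).choose r = (#s).choose (r + 1) * (r + 1) := by
      rcases Nat.eq_zero_or_eq_succ_pred #s with h | h
      · simp [h]
      · rw [h]; exact_mod_cast Nat.add_one_mul_choose_eq (#s - 1) r
    refine le_of_mul_le_mul_left ?_ (by positivity : (0 : ℝ) < r + 1)
    calc (r + 1 : ℝ) * (#s * ∑ t ∈ s.powersetCard (r + 1), ∏ i ∈ t, x i)
        = #s * ((r + 1) * ∑ t ∈ s.powersetCard (r + 1), ∏ i ∈ t, x i) := by ring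
      _ ≤ #s * ((#s - 1).choose r * ∑ i ∈ s, x i ^ (r + 1)) := by gcongr
      _ = (r + 1) * ((#s).choose (r + 1) * ∑ i ∈ s, x i ^ (r + 1)) := by
        rw [← mul_assoc, hchoose]; ring

theorem Real.sum_mul_rpow_le_rpow_sum_mul_rpow {ι : Type*} (s : Finset ι) (w z : ι → ℝ)
    (hw : ∀ i ∈ s, 0 ≤ w i) (hw' : ∑ i ∈ s, w i = 1) (hz : ∀ i ∈ s, 0 ≤ z i) {p q : ℝ}
    (hp : 0 < p) (hpq : p ≤ q) :
    ∑ i ∈ s, w i * z i ^ p ≤ (∑ i ∈ s, w i * z i ^ q) ^ (p / q) := by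
  have h := arith_mean_le_rpow_mean s w (fun i => z i ^ p) hw hw'
    (fun i hi => rpow_nonneg (hz i hi) p) ((one_le_div hp).2 hpq)
  refine h.trans_eq ?_
  rw [one_div_div]
  congr 1
  exact sum_congr rfl fun i hi => by rw [← rpow_mul (hz i hi), mul_div_cancel₀ q hp.ne']

theorem esymm_power_mean_bound_general (n : ℕ) (x : Fin n → ℝ) (hx : ∀ i, 0 ≤ x i)
    (k : ℕ) (hk : k ≤ n) :
    ∑ S ∈ Finset.univ.powersetCard (n - k), ∏ i ∈ S, x i ≤
      (n.choose k : ℝ) * ((1 / (n : ℝ)) * ∑ i, x i ^ n) ^ (((n : ℝ) - (k : ℝ)) / (n : ℝ)) := by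
  rw [← Nat.choose_symm hk, ← Nat.cast_sub hk]
  obtain ⟨m, hmn, hmk⟩ : ∃ m ≤ n, n - k = m := ⟨n - k, Nat.sub_le n k, rfl⟩
  rw [hmk]
  rcases m.eq_zero_or_pos with rfl | hm
  · simp
  have hn : (0 : ℝ) < n := by exact_mod_cast hm.trans_le hmn
  have muirhead := Real.card_mul_sum_powersetCard_prod_le univ m x fun i _ => hx i
  rw [card_univ, Fintype.card_fin] at muirhead
  have power_mean := Real.sum_mul_rpow_le_rpow_sum_mul_rpow univ (fun _ => 1 / (n : ℝ)) x
    (fun _ _ => by positivity) (by simp [hn.ne']) (fun i _ => hx i)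
    (p := m) (q := n) (by exact_mod_cast hm) (by exact_mod_cast hmn)
  simp only [Real.rpow_natCast, ← mul_sum] at power_mean
  calc ∑ S ∈ univ.powersetCard m, ∏ i ∈ S, x i
      ≤ n.choose m * ((1 / n) * ∑ i, x i ^ m) := by
        rwa [mul_left_comm, one_div, le_inv_mul_iff₀ hn]
    _ ≤ _ := by gcongr

theorem esymm_power_mean_bound (n : ℕ) (hn : 1 ≤ n) (x : Fin n → ℝ) (hx : ∀ i, 0 ≤ x i)
    (k : ℕ) (hk : k ≤ n) :
    ∑ S ∈ Finset.univ.powersetCard (n - k), ∏ i ∈ S, x i ≤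
      (n.choose k : ℝ) * ((1 / (n : ℝ)) * ∑ i, x i ^ n) ^ (((n : ℝ) - (k : ℝ)) / (n : ℝ)) :=
  esymm_power_mean_bound_general n x hx k hk
end

section
/- Second operator equivalence: with γ, λ > 0, α_i ∈ ℂ none of modulus γλ, F_γ(z) = ∏(z − α_i/γ), F_λ(z) = ∏(z − α_i/λ), and outer factors G_γ, G_λ from the factorizations F_γ = B_λ·G_γ and F_λ = B_γ·G_λ (a root α_i/γ of F_γ is captured by λ-Blaschke iff |α_i| < γλ, and similarly a root α_i/λ of F_λ is captured by γ-Blaschke iff |α_i| < γλ), then γⁿ G_γ(λz) = λⁿ G_λ(γz) for all z. -/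
/-!
Multiplying the factors of `G_γ(λz)` by `γ` and those of `G_λ(γz)` by `λ` turns both into
`γλ z - αᵢ` (outer roots) or `γλ - conj αᵢ · z` (reflected roots). These expressions are
symmetric in `γ` and `λ`, and so is the criterion `‖αᵢ‖ < γλ` that decides which form a
factor takes.
-/

open Finset

lemma ofReal_mul_reflected_factor {γ l : ℝ} (hγ : γ ≠ 0) (hl : l ≠ 0) (β z : ℂ) :
    (γ : ℂ) * ((1 / (l : ℂ)) * ((l : ℂ) ^ 2 - starRingEnd ℂ (β / (γ : ℂ)) * ((l : ℂ) * z))) =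
      γ * l - starRingEnd ℂ β * z := by
  have hγ' : (γ : ℂ) ≠ 0 := by exact_mod_cast hγ
  have hl' : (l : ℂ) ≠ 0 := by exact_mod_cast hl
  rw [map_div₀, Complex.conj_ofReal]
  field_simp

lemma mul_root_factor {γ : ℂ} (hγ : γ ≠ 0) (l β z : ℂ) :
    γ * (l * z - β / γ) = γ * l * z - β := by
  field_simp

theorem second_operator_equivalence_general (n : ℕ) (α : Fin n → ℂ) (γ l : ℝ)
    (hγ : 0 < γ) (hl : 0 < l) (z : ℂ) :
    (γ : ℂ) ^ n *
        ∏ i, (if ‖α i‖ < γ * l then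
            (1 / (l : ℂ)) * ((l : ℂ) ^ 2 - starRingEnd ℂ (α i / (γ : ℂ)) * ((l : ℂ) * z))
          else (l : ℂ) * z - α i / (γ : ℂ)) =
      (l : ℂ) ^ n *
        ∏ i, (if ‖α i‖ < γ * l then
            (1 / (γ : ℂ)) * ((γ : ℂ) ^ 2 - starRingEnd ℂ (α i / (l : ℂ)) * ((γ : ℂ) * z))
          else (γ : ℂ) * z - α i / (l : ℂ)) := by
  have hγ' : (γ : ℂ) ≠ 0 := by exact_mod_cast hγ.ne'
  have hl' : (l : ℂ) ≠ 0 := by exact_mod_cast hl.ne'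
  have pow_mul_prod (c : ℂ) (f : Fin n → ℂ) : c ^ n * ∏ i, f i = ∏ i, c * f i := by
    rw [← pow_card_mul_prod, card_fin]
  rw [pow_mul_prod, pow_mul_prod]
  refine prod_congr rfl fun i _ => ?_
  split
  · rw [ofReal_mul_reflected_factor hγ.ne' hl.ne', ofReal_mul_reflected_factor hl.ne' hγ.ne',
      mul_comm (l : ℂ)]
  · rw [mul_root_factor hγ', mul_root_factor hl', mul_comm (l : ℂ)]

theorem second_operator_equivalence (n : ℕ) (α : Fin n → ℂ) (γ l : ℝ)
    (hγ : 0 < γ) (hl : 0 < l) (hα : ∀ i, ‖α i‖ ≠ γ * l) (z : ℂ) :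
    (γ : ℂ) ^ n *
        ∏ i, (if ‖α i‖ < γ * l then
            (1 / (l : ℂ)) * ((l : ℂ) ^ 2 - starRingEnd ℂ (α i / (γ : ℂ)) * ((l : ℂ) * z))
          else (l : ℂ) * z - α i / (γ : ℂ)) =
      (l : ℂ) ^ n *
        ∏ i, (if ‖α i‖ < γ * l then
            (1 / (γ : ℂ)) * ((γ : ℂ) ^ 2 - starRingEnd ℂ (α i / (l : ℂ)) * ((γ : ℂ) * z))
          else (γ : ℂ) * z - α i / (l : ℂ)) :=
  second_operator_equivalence_general n α γ l hγ hl z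
end
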